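/- Let α be irrational with continued-fraction convergents p_n/q_n. Let q ≥ 0 be an integer, p ∈ ℤ, and n ≥ 0. If qα − p lies strictly between q_nα − p_n and q_{n+1}α − p_{n+1}, then either q ≥ q_n + q_{n+1} or p = q = 0. -/

import Mathlib

/-- Gauss map iterates of `α`: `x₀ = {α}`, `x_{n+1} = {1/x_n}`. -/
noncomputable def gaussIter (α : ℝ) : ℕ → ℝ
  | 0 => Int.fract α
  | n + 1 => Int.fract (gaussIter α n)⁻¹

/-- `cfa α n` is the partial quotient `a_{n+1} = ⌊1/x_n⌋` of the continued fraction of `α`. -/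
noncomputable def cfa (α : ℝ) (n : ℕ) : ℕ := ⌊(gaussIter α n)⁻¹⌋₊

/-- Denominators `q_n` of the continued fraction convergents of `α`:
`q₀ = 1`, `q₁ = a₁`, `q_{n+2} = a_{n+2} q_{n+1} + q_n`. -/
noncomputable def cfq (α : ℝ) : ℕ → ℕ
  | 0 => 1
  | 1 => cfa α 0
  | n + 2 => cfa α (n + 1) * cfq α (n + 1) + cfq α n

/-- Numerators `p_n` of the continued fraction convergents of `α`:
`p₀ = ⌊α⌋`, `p₁ = a₁⌊α⌋ + 1`, `p_{n+2} = a_{n+2} p_{n+1} + p_n`. -/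
noncomputable def cfp (α : ℝ) : ℕ → ℤ
  | 0 => ⌊α⌋
  | 1 => cfa α 0 * ⌊α⌋ + 1
  | n + 2 => cfa α (n + 1) * cfp α (n + 1) + cfp α n

/-- `z_n = q_n α - p_n`. -/
noncomputable def cfz (α : ℝ) (n : ℕ) : ℝ := (cfq α n : ℝ) * α - (cfp α n : ℝ)

/-! Since `p_{n+1} q_n - p_n q_{n+1} = ±1`, every lattice point `(q, p)` is an integer combination
`a (q_n, p_n) + b (q_{n+1}, p_{n+1})`, so `qα - p = a z_n + b z_{n+1}` with `z_k = q_k α - p_k`.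
The numbers `z_n` and `z_{n+1}` have opposite signs, so if `a` and `b` had opposite signs then
`a z_n` and `b z_{n+1}` would push `qα - p` beyond `z_n` or beyond `z_{n+1}`. Hence `a`, `b` are
both positive, giving `q ≥ q_n + q_{n+1}`, or both nonpositive, which `q ≥ 0` forces to be zero. -/

lemma exists_int_combination_of_isUnit_det {P₀ P₁ Q₀ Q₁ : ℤ} (hdet : IsUnit (P₁ * Q₀ - P₀ * Q₁))
    (p q : ℤ) : ∃ a b : ℤ, q = a * Q₀ + b * Q₁ ∧ p = a * P₀ + b * P₁ := by
  set e := P₁ * Q₀ - P₀ * Q₁ with he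
  have he2 : e * e = 1 := Int.isUnit_mul_self hdet
  refine ⟨-e * (p * Q₁ - q * P₁), e * (p * Q₀ - q * P₀), ?_, ?_⟩
  · linear_combination (-(e * q)) * he - q * he2
  · linear_combination (-(e * p)) * he - p * he2

lemma not_between_of_mul_neg {u v a b : ℝ} (huv : u * v < 0) (ha : 1 ≤ a) (hb : b ≤ 0)
    (h₁ : min u v < a * u + b * v) (h₂ : a * u + b * v < max u v) : False := by
  rcases mul_neg_iff.mp huv with ⟨hu, hv⟩ | ⟨hu, hv⟩
  · rw [max_eq_left (hv.trans hu).le] at h₂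
    nlinarith
  · rw [min_eq_left (hu.trans hv).le] at h₁
    nlinarith

lemma pos_iff_pos_of_between {u v : ℝ} {a b : ℤ} (huv : u * v < 0)
    (h₁ : min u v < a * u + b * v) (h₂ : a * u + b * v < max u v) : 0 < a ↔ 0 < b := by
  constructor
  · intro ha
    by_contra! hb
    exact not_between_of_mul_neg huv (by exact_mod_cast ha) (by exact_mod_cast hb) h₁ h₂
  · intro hb
    by_contra! ha
    rw [mul_comm] at huv
    rw [min_comm, add_comm] at h₁
    rw [max_comm, add_comm] at h₂
    exact not_between_of_mul_neg huv (by exact_mod_cast hb) (by exact_mod_cast ha) h₁ h₂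

lemma add_le_or_eq_zero_of_pos_iff_pos {Q₀ Q₁ a b : ℤ} (hQ₀ : 1 ≤ Q₀) (hQ₁ : 1 ≤ Q₁)
    (hq : 0 ≤ a * Q₀ + b * Q₁) (hab : 0 < a ↔ 0 < b) :
    Q₀ + Q₁ ≤ a * Q₀ + b * Q₁ ∨ a = 0 ∧ b = 0 := by
  by_cases ha : 0 < a
  · left
    nlinarith [hab.mp ha]
  · right
    have hb : b ≤ 0 := not_lt.mp (mt hab.mpr ha)
    constructor <;> nlinarith

section ContinuedFraction

variable {α : ℝ}

lemma gaussIter_nonneg (α : ℝ) (n : ℕ) : 0 ≤ gaussIter α n := by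
  cases n <;> exact Int.fract_nonneg _

lemma gaussIter_lt_one (α : ℝ) (n : ℕ) : gaussIter α n < 1 := by
  cases n <;> exact Int.fract_lt_one _

lemma irrational_gaussIter (hα : Irrational α) (n : ℕ) : Irrational (gaussIter α n) := by
  induction n with
  | zero => exact hα.sub_intCast _
  | succ n ih => exact ih.inv.sub_intCast _

lemma gaussIter_pos (hα : Irrational α) (n : ℕ) : 0 < gaussIter α n :=
  (gaussIter_nonneg α n).lt_of_ne (irrational_gaussIter hα n).ne_zero.symm

lemma cfa_eq_inv_sub (α : ℝ) (n : ℕ) :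
    (cfa α n : ℝ) = (gaussIter α n)⁻¹ - gaussIter α (n + 1) := by
  rw [cfa, natCast_floor_eq_intCast_floor (inv_nonneg.mpr (gaussIter_nonneg α n)), gaussIter,
    ← Int.self_sub_floor]
  ring

lemma one_le_cfa (hα : Irrational α) (n : ℕ) : 1 ≤ cfa α n :=
  (Nat.one_le_floor_iff _).mpr <|
    (one_lt_inv₀ (gaussIter_pos hα n)).mpr (gaussIter_lt_one α n) |>.le

lemma one_le_cfq (hα : Irrational α) (n : ℕ) : 1 ≤ cfq α n := by
  induction n using Nat.twoStepInduction with
  | zero => exact le_rfl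
  | one => exact one_le_cfa hα 0
  | more n ih _ =>
    rw [cfq]
    omega

lemma cfp_mul_cfq_sub_cfp_mul_cfq (α : ℝ) (n : ℕ) :
    cfp α (n + 1) * cfq α n - cfp α n * cfq α (n + 1) = (-1) ^ n := by
  induction n with
  | zero =>
    simp only [cfp, cfq, pow_zero]
    ring
  | succ n ih =>
    rw [cfp, cfq]
    push_cast
    linear_combination (-1 : ℤ) * ih

lemma cfz_add_two (α : ℝ) (n : ℕ) :
    cfz α (n + 2) = cfa α (n + 1) * cfz α (n + 1) + cfz α n := by
  simp only [cfz, cfq, cfp]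
  push_cast
  ring

lemma cfz_succ (hα : Irrational α) (n : ℕ) :
    cfz α (n + 1) = -gaussIter α (n + 1) * cfz α n := by
  induction n with
  | zero =>
    have hx₀ : gaussIter α 0 = α - ⌊α⌋ := (Int.self_sub_floor α).symm
    have hinv : (gaussIter α 0)⁻¹ * gaussIter α 0 = 1 := inv_mul_cancel₀ (gaussIter_pos hα 0).ne'
    simp only [cfz, cfq, cfp]
    push_cast
    rw [cfa_eq_inv_sub]
    linear_combination -(gaussIter α 0)⁻¹ * hx₀ + hinv
  | succ n ih =>
    have hinv : (gaussIter α (n + 1))⁻¹ * gaussIter α (n + 1) = 1 :=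
      inv_mul_cancel₀ (gaussIter_pos hα (n + 1)).ne'
    rw [cfz_add_two, cfa_eq_inv_sub, ih]
    linear_combination (-cfz α n) * hinv

lemma cfz_ne_zero (hα : Irrational α) (n : ℕ) : cfz α n ≠ 0 :=
  ((hα.natCast_mul (Nat.one_le_iff_ne_zero.mp (one_le_cfq hα n))).sub_intCast _).ne_zero

lemma cfz_mul_cfz_succ_neg (hα : Irrational α) (n : ℕ) : cfz α n * cfz α (n + 1) < 0 := by
  have hx := gaussIter_pos hα (n + 1)
  have hz := cfz_ne_zero hα n
  rw [cfz_succ hα]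
  nlinarith [mul_self_pos.mpr hz]

end ContinuedFraction

/-- If `qα - p` lies strictly between the consecutive best approximations `q_n α - p_n` and
`q_{n+1} α - p_{n+1}`, then either `q ≥ q_n + q_{n+1}` or `p = q = 0`. -/
theorem statement9 (α : ℝ) (hα : Irrational α) (n : ℕ) (q : ℕ) (p : ℤ)
    (h₁ : min (cfz α n) (cfz α (n + 1)) < (q : ℝ) * α - (p : ℝ))
    (h₂ : (q : ℝ) * α - (p : ℝ) < max (cfz α n) (cfz α (n + 1))) :
    cfq α n + cfq α (n + 1) ≤ q ∨ (p = 0 ∧ q = 0) := by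
  obtain ⟨a, b, hq, hp⟩ := exists_int_combination_of_isUnit_det
    (by rw [cfp_mul_cfq_sub_cfp_mul_cfq α n]; exact isUnit_neg_one.pow n) p q
  have hz : (q : ℝ) * α - p = a * cfz α n + b * cfz α (n + 1) := by
    rw [← Int.cast_natCast q, hq, hp]
    simp only [cfz]
    push_cast
    ring
  rw [hz] at h₁ h₂
  have hab := pos_iff_pos_of_between (cfz_mul_cfz_succ_neg hα n) h₁ h₂
  have hQ₀ : (1 : ℤ) ≤ cfq α n := by exact_mod_cast one_le_cfq hα n
  have hQ₁ : (1 : ℤ) ≤ cfq α (n + 1) := by exact_mod_cast one_le_cfq hα (n + 1)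
  rcases add_le_or_eq_zero_of_pos_iff_pos hQ₀ hQ₁ (hq ▸ q.cast_nonneg) hab with hle | ⟨rfl, rfl⟩
  · left
    exact_mod_cast hq ▸ hle
  · right
    simp only [zero_mul, add_zero] at hp hq
    exact ⟨hp, by exact_mod_cast hq⟩
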